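/- arXiv:1608.01671 — 2 statements merged into one kernel-verified Lean document; each statement's English description precedes it below -/
import Mathlib

section
/- For every real a > 0 and integer n ≥ 0, lim_{s→∞} (1 - Q_n(as)/ζ(as))^{-1/s} = p_{n+1}^a, where the limit is over real s → ∞. -/
open Filter Real

noncomputable def zetaR (s : ℝ) : ℝ := ∑' m : ℕ, (m : ℝ) ^ (-s)

/-- `P k` is the (k+1)-st prime: `P 0 = 2`, `P 1 = 3`, ... -/
noncomputable def P (k : ℕ) : ℕ := Nat.nth Nat.Prime k

/-- Partial Euler product `Q n s = ∏_{k=1}^n (1 - p_k^{-s})⁻¹`. -/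
noncomputable def Q (n : ℕ) (s : ℝ) : ℝ := ∏ k ∈ Finset.range n, (1 - (P k : ℝ) ^ (-s))⁻¹

/-!
Write `σ = a s` and `p = p_{n+1}`. By the Euler product, `Q_n(σ)` is the sum of `m^{-σ}` over the
`p`-smooth `m`, so `ζ(σ) - Q_n(σ)` is the sum over the remaining `m`, all of which are `≥ p`, with
`m = p` among them. Hence `p^{-σ} ≤ ζ(σ) - Q_n(σ) ≤ p^2 ζ(2) p^{-σ}`, and since `1 ≤ ζ(σ) ≤ ζ(2)`,
`1 - Q_n(σ)/ζ(σ)` is squeezed between two constant multiples of `(p^a)^{-s}`. Taking the power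
`-1/s` turns these constants into factors tending to `1`.
-/

open Topology

lemma tendsto_rpow_neg_one_div_of_bounds {f : ℝ → ℝ} {q c C : ℝ} (hq : 0 < q) (hc : 0 < c)
    (hC : 0 < C) (hlow : ∀ᶠ s in atTop, c * q ^ (-s) ≤ f s)
    (hup : ∀ᶠ s in atTop, f s ≤ C * q ^ (-s)) :
    Tendsto (fun s => f s ^ (-1 / s)) atTop (𝓝 q) := by
  have hscaled : ∀ {c : ℝ}, 0 < c →
      Tendsto (fun s : ℝ => (c * q ^ (-s)) ^ (-1 / s)) atTop (𝓝 q) := by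
    intro c hc
    have hexp : Tendsto (fun s : ℝ => -1 / s) atTop (𝓝 0) :=
      tendsto_const_nhds.div_atTop tendsto_id
    have hlim : Tendsto (fun s : ℝ => c ^ (-1 / s) * q) atTop (𝓝 q) := by
      simpa using ((continuousAt_const_rpow hc.ne').tendsto.comp hexp).mul_const q
    refine hlim.congr' ?_
    filter_upwards [eventually_ne_atTop 0] with s hs
    rw [mul_rpow hc.le (rpow_nonneg hq.le _), ← rpow_mul hq.le,
      show -s * (-1 / s) = 1 by field_simp, rpow_one]
  have hexp_nonpos : ∀ᶠ s : ℝ in atTop, -1 / s ≤ 0 := by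
    filter_upwards [eventually_gt_atTop 0] with s hs
    exact div_nonpos_of_nonpos_of_nonneg (by norm_num) hs.le
  refine tendsto_of_tendsto_of_tendsto_of_le_of_le' (hscaled hC) (hscaled hc) ?_ ?_
  · filter_upwards [hlow, hup, hexp_nonpos] with s hl hu hs
    exact rpow_le_rpow_of_nonpos ((by positivity : 0 < c * q ^ (-s)).trans_le hl) hu hs
  · filter_upwards [hlow, hexp_nonpos] with s hl hs
    exact rpow_le_rpow_of_nonpos (by positivity) hl hs

lemma P_prime (n : ℕ) : (P n).Prime := Nat.prime_nth_prime n

lemma P_injective : Function.Injective P := Nat.nth_injective Nat.infinite_setOfPred_prime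

lemma primesBelow_P (n : ℕ) : (P n).primesBelow = (Finset.range n).image P := by
  ext q
  simp only [Nat.mem_primesBelow, Finset.mem_image, Finset.mem_range, P]
  constructor
  · rintro ⟨hlt, hq⟩
    refine ⟨Nat.count Nat.Prime q, ?_, Nat.nth_count hq⟩
    rwa [← Nat.nth_lt_nth Nat.infinite_setOfPred_prime, Nat.nth_count hq]
  · rintro ⟨k, hk, rfl⟩
    exact ⟨(Nat.nth_lt_nth Nat.infinite_setOfPred_prime).2 hk, Nat.prime_nth_prime k⟩

lemma summable_nat_rpow_neg {σ : ℝ} (hσ : 1 < σ) : Summable fun m : ℕ => (m : ℝ) ^ (-σ) :=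
  summable_nat_rpow.2 (by linarith)

lemma Q_eq_tsum_smoothNumbers (n : ℕ) {σ : ℝ} (hσ : 1 < σ) :
    Q n σ = ∑' m : (P n).smoothNumbers, ((m : ℕ) : ℝ) ^ (-σ) := by
  let f : ℕ →* ℝ :=
    { toFun m := (m : ℝ) ^ (-σ)
      map_one' := by simp
      map_mul' m k := by push_cast; exact mul_rpow m.cast_nonneg k.cast_nonneg }
  have h := EulerProduct.prod_primesBelow_geometric_eq_tsum_smoothNumbers (f := f)
    (summable_nat_rpow_neg hσ) (P n)
  rwa [primesBelow_P, Finset.prod_image fun _ _ _ _ h ↦ P_injective h] at h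

lemma zetaR_sub_Q_eq_tsum_compl_smoothNumbers (n : ℕ) {σ : ℝ} (hσ : 1 < σ) :
    zetaR σ - Q n σ = ∑' m : (((P n).smoothNumbers)ᶜ : Set ℕ), ((m : ℕ) : ℝ) ^ (-σ) := by
  rw [Q_eq_tsum_smoothNumbers n hσ, zetaR,
    ← (summable_nat_rpow_neg hσ).tsum_subtype_add_tsum_subtype_compl (P n).smoothNumbers]
  ring

lemma rpow_neg_le_tsum_compl_smoothNumbers {N : ℕ} (hN : N.Prime) {σ : ℝ} (hσ : 1 < σ) :
    (N : ℝ) ^ (-σ) ≤ ∑' m : ((N.smoothNumbers)ᶜ : Set ℕ), ((m : ℕ) : ℝ) ^ (-σ) :=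
  have hN_compl : N ∈ (N.smoothNumbers)ᶜ := fun h ↦
    lt_irrefl N (Nat.mem_smoothNumbers'.1 h N hN dvd_rfl)
  ((summable_nat_rpow_neg hσ).subtype _).le_tsum ⟨N, hN_compl⟩
    fun _ _ ↦ rpow_nonneg (Nat.cast_nonneg _) _

lemma rpow_neg_le_mul_rpow_neg {x y σ τ : ℝ} (hy : 0 < y) (hyx : y ≤ x) (hτσ : τ ≤ σ) :
    x ^ (-σ) ≤ y ^ (τ - σ) * x ^ (-τ) := by
  have hx : 0 < x := hy.trans_le hyx
  calc x ^ (-σ) = x ^ (τ - σ) * x ^ (-τ) := by rw [← rpow_add hx]; ring_nf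
    _ ≤ y ^ (τ - σ) * x ^ (-τ) :=
      mul_le_mul_of_nonneg_right (rpow_le_rpow_of_nonpos hy hyx (by linarith)) (by positivity)

lemma tsum_compl_smoothNumbers_le {N : ℕ} (hN : 0 < N) {σ τ : ℝ} (hτ : 1 < τ) (hτσ : τ ≤ σ) :
    ∑' m : ((N.smoothNumbers)ᶜ : Set ℕ), ((m : ℕ) : ℝ) ^ (-σ) ≤
      (N : ℝ) ^ τ * zetaR τ * (N : ℝ) ^ (-σ) := by
  have hterm (m : ((N.smoothNumbers)ᶜ : Set ℕ)) :
      ((m : ℕ) : ℝ) ^ (-σ) ≤ (N : ℝ) ^ (τ - σ) * ((m : ℕ) : ℝ) ^ (-τ) := by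
    obtain ⟨m, hm⟩ := m
    rcases Nat.eq_zero_or_pos m with rfl | hm0
    · simp [zero_rpow (by linarith : -σ ≠ 0), zero_rpow (by linarith : -τ ≠ 0)]
    · exact rpow_neg_le_mul_rpow_neg (by exact_mod_cast hN)
        (by exact_mod_cast Nat.smoothNumbers_compl N ⟨hm, hm0.ne'⟩) hτσ
  have hsum := summable_nat_rpow_neg hτ
  calc ∑' m : ((N.smoothNumbers)ᶜ : Set ℕ), ((m : ℕ) : ℝ) ^ (-σ)
      ≤ ∑' m : ((N.smoothNumbers)ᶜ : Set ℕ), (N : ℝ) ^ (τ - σ) * ((m : ℕ) : ℝ) ^ (-τ) :=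
        Summable.tsum_le_tsum hterm ((summable_nat_rpow_neg (hτ.trans_le hτσ)).subtype _)
          ((hsum.subtype _).mul_left _)
    _ = (N : ℝ) ^ (τ - σ) * ∑' m : ((N.smoothNumbers)ᶜ : Set ℕ), ((m : ℕ) : ℝ) ^ (-τ) :=
        tsum_mul_left
    _ ≤ (N : ℝ) ^ (τ - σ) * zetaR τ := by
      gcongr
      exact hsum.tsum_subtype_le _ _ fun _ ↦ rpow_nonneg (Nat.cast_nonneg _) _
    _ = (N : ℝ) ^ τ * zetaR τ * (N : ℝ) ^ (-σ) := by
      rw [sub_eq_add_neg, rpow_add (by exact_mod_cast hN)]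
      ring

lemma one_le_zetaR {σ : ℝ} (hσ : 1 < σ) : 1 ≤ zetaR σ := by
  simpa [zetaR] using
    (summable_nat_rpow_neg hσ).le_tsum 1 fun _ _ ↦ rpow_nonneg (Nat.cast_nonneg _) _

lemma zetaR_le_zetaR {σ τ : ℝ} (hτ : 1 < τ) (hτσ : τ ≤ σ) : zetaR σ ≤ zetaR τ := by
  refine Summable.tsum_le_tsum (fun m ↦ ?_) (summable_nat_rpow_neg (hτ.trans_le hτσ))
    (summable_nat_rpow_neg hτ)
  rcases Nat.eq_zero_or_pos m with rfl | hm
  · simp [zero_rpow (by linarith : -σ ≠ 0), zero_rpow (by linarith : -τ ≠ 0)]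
  · exact rpow_le_rpow_of_exponent_le (by exact_mod_cast hm) (by linarith)

lemma le_one_sub_Q_div_zetaR (n : ℕ) {σ τ : ℝ} (hτ : 1 < τ) (hτσ : τ ≤ σ) :
    (zetaR τ)⁻¹ * (P n : ℝ) ^ (-σ) ≤ 1 - Q n σ / zetaR σ := by
  have hσ := hτ.trans_le hτσ
  have hζ := one_le_zetaR hσ
  rw [one_sub_div (by positivity), zetaR_sub_Q_eq_tsum_compl_smoothNumbers n hσ, inv_mul_eq_div]
  exact div_le_div₀ (tsum_nonneg fun _ ↦ rpow_nonneg (Nat.cast_nonneg _) _)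
    (rpow_neg_le_tsum_compl_smoothNumbers (P_prime n) hσ) (by positivity) (zetaR_le_zetaR hτ hτσ)

lemma one_sub_Q_div_zetaR_le (n : ℕ) {σ τ : ℝ} (hτ : 1 < τ) (hτσ : τ ≤ σ) :
    1 - Q n σ / zetaR σ ≤ (P n : ℝ) ^ τ * zetaR τ * (P n : ℝ) ^ (-σ) := by
  have hσ := hτ.trans_le hτσ
  have hζ := one_le_zetaR hσ
  rw [one_sub_div (by positivity), zetaR_sub_Q_eq_tsum_compl_smoothNumbers n hσ]
  calc _ ≤ ∑' m : (((P n).smoothNumbers)ᶜ : Set ℕ), ((m : ℕ) : ℝ) ^ (-σ) :=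
        div_le_self (tsum_nonneg fun _ ↦ rpow_nonneg (Nat.cast_nonneg _) _) hζ
    _ ≤ _ := tsum_compl_smoothNumbers_le (P_prime n).pos hτ hτσ

theorem golomb_power (a : ℝ) (ha : 0 < a) (n : ℕ) :
    Tendsto (fun s : ℝ => (1 - Q n (a * s) / zetaR (a * s)) ^ (-1 / s)) atTop
      (nhds ((P n : ℝ) ^ a)) := by
  have hp : (0 : ℝ) < P n := by exact_mod_cast (P_prime n).pos
  have hζ : 0 < zetaR 2 := one_pos.trans_le (one_le_zetaR one_lt_two)
  have hlarge : ∀ᶠ s in atTop, 2 ≤ a * s := by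
    filter_upwards [eventually_ge_atTop (2 / a)] with s hs
    rwa [div_le_iff₀' ha] at hs
  have hpow (s : ℝ) : (P n : ℝ) ^ (-(a * s)) = ((P n : ℝ) ^ a) ^ (-s) := by
    rw [← rpow_mul hp.le, mul_neg]
  refine tendsto_rpow_neg_one_div_of_bounds (rpow_pos_of_pos hp a) (inv_pos.2 hζ)
    (by positivity : 0 < (P n : ℝ) ^ (2 : ℝ) * zetaR 2) ?_ ?_
  · filter_upwards [hlarge] with s hs
    rw [← hpow]
    exact le_one_sub_Q_div_zetaR n one_lt_two hs
  · filter_upwards [hlarge] with s hs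
    rw [← hpow]
    exact one_sub_Q_div_zetaR_le n one_lt_two hs
end

section
/- For every integer n ≥ 0, the limit as real s → ∞ of (1 - Q_n'(s)/ζ'(s))^{-1/s} equals p_{n+1}/2. -/
open Filter Real

/-! `Q n s` expands, by the Euler product for the primes below `p = P n`, into the Dirichlet
series of the `p`-smooth numbers, so `1 - Q n' / ζ'` is the quotient of
`∑_{m not p-smooth} log m · m^{-s}` by `∑_m log m · m^{-s}`. Their first non-zero terms are
`log p · p^{-s}` and `log 2 · 2^{-s}`, and by dominated convergence each series is asymptotic to
its first term as `s → ∞`. The `(-1/s)`-th power of the quotient of leading terms is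
`(p / 2) · (log p / log 2)^{-1/s} → p / 2`. -/

open Topology

-- The `m = 0` term is `c 0 * 0 ^ (-s) = 0` for `s ≠ 0`, as in `zetaR`.
noncomputable def dirichletSeries (c : ℕ → ℝ) (s : ℝ) : ℝ := ∑' m : ℕ, c m * (m : ℝ) ^ (-s)

lemma summable_log_mul_rpow_neg {σ : ℝ} (hσ : 1 < σ) :
    Summable fun m : ℕ => Real.log m * (m : ℝ) ^ (-σ) := by
  obtain ⟨ε, hε, hεσ⟩ : ∃ ε : ℝ, 0 < ε ∧ ε - σ < -1 := ⟨(σ - 1) / 2, by linarith, by linarith⟩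
  refine Summable.of_nonneg_of_le
    (fun m => mul_nonneg (Real.log_natCast_nonneg m) (rpow_nonneg m.cast_nonneg _))
    (fun m => ?_) ((summable_nat_rpow.mpr hεσ).div_const ε)
  calc Real.log m * (m : ℝ) ^ (-σ) ≤ (m : ℝ) ^ ε / ε * (m : ℝ) ^ (-σ) :=
        mul_le_mul_of_nonneg_right (log_le_rpow_div m.cast_nonneg hε)
          (rpow_nonneg m.cast_nonneg _)
    _ = (m : ℝ) ^ (ε - σ) / ε := by
        rw [div_mul_eq_mul_div, ← rpow_add' m.cast_nonneg (by linarith), sub_eq_add_neg]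

lemma summable_log_mul_mul_rpow_neg {c : ℕ → ℝ} {C : ℝ} (hc : ∀ m, ‖c m‖ ≤ C) {s : ℝ}
    (hs : 1 < s) : Summable fun m : ℕ => Real.log m * c m * (m : ℝ) ^ (-s) := by
  simp only [Real.norm_eq_abs] at hc
  refine Summable.of_norm_bounded ((summable_log_mul_rpow_neg hs).mul_left C) fun m => ?_
  rw [Real.norm_eq_abs, mul_right_comm, abs_mul, mul_comm C,
    abs_of_nonneg (mul_nonneg (Real.log_natCast_nonneg m) (rpow_nonneg m.cast_nonneg _))]
  exact mul_le_mul_of_nonneg_left (hc m)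
    (mul_nonneg (Real.log_natCast_nonneg m) (rpow_nonneg m.cast_nonneg _))

lemma dirichletSeries_nonneg {c : ℕ → ℝ} (hc : ∀ m, 0 ≤ c m) (s : ℝ) :
    0 ≤ dirichletSeries c s :=
  tsum_nonneg fun m => mul_nonneg (hc m) (rpow_nonneg m.cast_nonneg _)

lemma dirichletSeries_sub {c d : ℕ → ℝ} {s : ℝ}
    (hc : Summable fun m : ℕ => c m * (m : ℝ) ^ (-s))
    (hd : Summable fun m : ℕ => d m * (m : ℝ) ^ (-s)) :
    dirichletSeries (c - d) s = dirichletSeries c s - dirichletSeries d s := by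
  simp only [dirichletSeries, Pi.sub_apply, sub_mul]
  exact hc.tsum_sub hd

lemma hasDerivAt_natCast_rpow_neg (m : ℕ) {s : ℝ} (hs : 0 < s) :
    HasDerivAt (fun y : ℝ => (m : ℝ) ^ (-y)) (-(Real.log m * (m : ℝ) ^ (-s))) s := by
  rcases Nat.eq_zero_or_pos m with rfl | hm
  · have hzero : (fun y : ℝ => ((0 : ℕ) : ℝ) ^ (-y)) =ᶠ[𝓝 s] fun _ => 0 := by
      filter_upwards [Ioi_mem_nhds hs] with y hy
      simp [zero_rpow (neg_ne_zero.mpr (ne_of_gt hy))]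
    simpa using (hasDerivAt_const s (0 : ℝ)).congr_of_eventuallyEq hzero
  · have := (hasStrictDerivAt_const_rpow (Nat.cast_pos.mpr hm) (-s)).hasDerivAt.comp s
      (hasDerivAt_neg s)
    exact this.congr_deriv (by ring)

lemma hasDerivAt_dirichletSeries {c : ℕ → ℝ} {C : ℝ} (hc : ∀ m, ‖c m‖ ≤ C) {s : ℝ}
    (hs : 1 < s) :
    HasDerivAt (dirichletSeries c) (-dirichletSeries (fun m => Real.log m * c m) s) s := by
  set σ := (1 + s) / 2
  have hσ : 1 < σ := by simp only [σ]; linarith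
  have hσs : σ < s := by simp only [σ]; linarith
  simp only [Real.norm_eq_abs] at hc
  have hC : 0 ≤ C := (abs_nonneg _).trans (hc 0)
  have hderiv (m : ℕ) (y : ℝ) (hy : y ∈ Set.Ioi σ) :
      HasDerivAt (fun y : ℝ => c m * (m : ℝ) ^ (-y)) (-(Real.log m * c m * (m : ℝ) ^ (-y))) y :=
    ((hasDerivAt_natCast_rpow_neg m (by linarith [hy.out])).const_mul (c m)).congr_deriv (by ring)
  have hbound (m : ℕ) (y : ℝ) (hy : y ∈ Set.Ioi σ) :
      ‖-(Real.log m * c m * (m : ℝ) ^ (-y))‖ ≤ C * (Real.log m * (m : ℝ) ^ (-σ)) := by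
    have hlog := Real.log_natCast_nonneg m
    have hdecay : Real.log m * (m : ℝ) ^ (-y) ≤ Real.log m * (m : ℝ) ^ (-σ) := by
      rcases Nat.eq_zero_or_pos m with rfl | hm
      · simp
      · exact mul_le_mul_of_nonneg_left (rpow_le_rpow_of_exponent_le (by exact_mod_cast hm)
          (by linarith [hy.out])) hlog
    rw [norm_neg, Real.norm_eq_abs, mul_right_comm, abs_mul, mul_comm,
      abs_of_nonneg (mul_nonneg hlog (rpow_nonneg m.cast_nonneg _))]
    exact mul_le_mul (hc m) hdecay (mul_nonneg hlog (rpow_nonneg m.cast_nonneg _)) hC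
  have hsum : Summable fun m : ℕ => c m * (m : ℝ) ^ (-s) := by
    refine Summable.of_norm_bounded ((summable_nat_rpow.mpr (by linarith : -s < -1)).mul_left C)
      fun m => ?_
    rw [Real.norm_eq_abs, abs_mul, abs_of_nonneg (rpow_nonneg m.cast_nonneg _)]
    exact mul_le_mul_of_nonneg_right (hc m) (rpow_nonneg m.cast_nonneg _)
  have := hasDerivAt_tsum_of_isPreconnected ((summable_log_mul_rpow_neg hσ).mul_left C)
    isOpen_Ioi isPreconnected_Ioi hderiv hbound hσs hsum hσs
  rwa [dirichletSeries, ← tsum_neg]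

lemma tendsto_rpow_mul_dirichletSeries {c : ℕ → ℝ} {a : ℕ} (ha : 0 < a)
    (hc : ∀ m < a, c m = 0) {σ : ℝ} (hσ : Summable fun m : ℕ => ‖c m * (m : ℝ) ^ (-σ)‖) :
    Tendsto (fun s => (a : ℝ) ^ s * dirichletSeries c s) atTop (𝓝 (c a)) := by
  have hA : (0 : ℝ) < a := Nat.cast_pos.mpr ha
  have hshift (s : ℝ) (m : ℕ) :
      (a : ℝ) ^ s * (c m * (m : ℝ) ^ (-s)) = c m * ((a : ℝ) / m) ^ s := by
    rw [div_rpow hA.le m.cast_nonneg, rpow_neg m.cast_nonneg]; ring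
  have hlim (m : ℕ) : Tendsto (fun s : ℝ => c m * ((a : ℝ) / m) ^ s) atTop
      (𝓝 (if m = a then c a else 0)) := by
    rcases lt_trichotomy m a with hm | rfl | hm
    · simp [hc m hm, hm.ne]
    · simp [div_self hA.ne']
    · have hr : (a : ℝ) / m < 1 :=
        (div_lt_one (by exact_mod_cast ha.trans hm)).mpr (by exact_mod_cast hm)
      have hr0 : -1 < (a : ℝ) / m := by linarith [div_nonneg hA.le m.cast_nonneg]
      simpa [hm.ne'] using (tendsto_rpow_atTop_of_base_lt_one _ hr0 hr).const_mul (c m)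
  have hbound : ∀ᶠ s : ℝ in atTop, ∀ m : ℕ,
      ‖c m * ((a : ℝ) / m) ^ s‖ ≤ (a : ℝ) ^ σ * ‖c m * (m : ℝ) ^ (-σ)‖ := by
    filter_upwards [eventually_ge_atTop σ] with s hs m
    rcases lt_or_ge m a with hm | hm
    · simp [hc m hm]
    · have hm0 : (0 : ℝ) < m := by exact_mod_cast ha.trans_le hm
      rw [← norm_of_nonneg (rpow_nonneg hA.le σ), ← norm_mul, hshift, norm_mul, norm_mul]
      refine mul_le_mul_of_nonneg_left ?_ (norm_nonneg _)
      rw [norm_of_nonneg (rpow_nonneg (by positivity) _),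
        norm_of_nonneg (rpow_nonneg (by positivity) _)]
      exact rpow_le_rpow_of_exponent_ge (by positivity)
        ((div_le_one hm0).mpr (by exact_mod_cast hm)) hs
  have := tendsto_tsum_of_dominated_convergence (hσ.mul_left _) hlim hbound
  rw [tsum_ite_eq] at this
  refine this.congr fun s => ?_
  simp only [dirichletSeries, ← tsum_mul_left, hshift]

lemma tendsto_rpow_neg_one_div_of_tendsto_rpow_mul {f : ℝ → ℝ} {a A : ℝ} (ha : 0 < a) (hA : 0 < A)
    (h : Tendsto (fun s => a ^ s * f s) atTop (𝓝 A)) :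
    Tendsto (fun s => f s ^ (-1 / s)) atTop (𝓝 a) := by
  have hexp : Tendsto (fun s : ℝ => -1 / s) atTop (𝓝 0) :=
    tendsto_const_nhds.div_atTop tendsto_id
  have := (h.rpow hexp (Or.inl hA.ne')).mul_const a
  rw [rpow_zero, one_mul] at this
  refine this.congr' ?_
  filter_upwards [h.eventually (eventually_gt_nhds hA), eventually_gt_atTop 0] with s hpos hs
  have hf : 0 ≤ f s := (pos_of_mul_pos_right hpos (rpow_nonneg ha.le s)).le
  rw [mul_rpow (rpow_nonneg ha.le s) hf, ← rpow_mul ha.le, mul_right_comm,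
    ← rpow_add_one ha.ne', show s * (-1 / s) + 1 = 0 by field_simp; ring, rpow_zero, one_mul]

lemma zetaR_eq_dirichletSeries : zetaR = dirichletSeries 1 := by
  funext s; simp [zetaR, dirichletSeries]

noncomputable def natCastRpowNegHom (s : ℝ) : ℕ →* ℝ where
  toFun m := (m : ℝ) ^ (-s)
  map_one' := by simp
  map_mul' m k := by push_cast; exact mul_rpow m.cast_nonneg k.cast_nonneg

lemma norm_indicator_one_le (S : Set ℕ) (m : ℕ) : ‖S.indicator (1 : ℕ → ℝ) m‖ ≤ 1 :=
  (norm_indicator_le_norm_self (s := S) (f := 1) (a := m)).trans (by simp)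

lemma Q_eq_dirichletSeries (n : ℕ) {s : ℝ} (hs : 1 < s) :
    Q n s = dirichletSeries ((P n).smoothNumbers.indicator 1) s := by
  have hsum : Summable (natCastRpowNegHom s) := summable_nat_rpow.mpr (by linarith)
  have heuler := EulerProduct.prod_primesBelow_geometric_eq_tsum_smoothNumbers hsum (P n)
  rw [primesBelow_P, Finset.prod_image P_injective.injOn, tsum_subtype] at heuler
  rw [Q, dirichletSeries]
  refine heuler.trans (tsum_congr fun m => ?_)
  by_cases hm : m ∈ (P n).smoothNumbers <;> simp [hm, natCastRpowNegHom]

lemma deriv_zetaR {s : ℝ} (hs : 1 < s) :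
    deriv zetaR s = -dirichletSeries (fun m => Real.log m) s := by
  rw [zetaR_eq_dirichletSeries, (hasDerivAt_dirichletSeries (C := 1) (by simp) hs).deriv]
  simp

lemma deriv_Q (n : ℕ) {s : ℝ} (hs : 1 < s) :
    deriv (Q n) s =
      -dirichletSeries (fun m => Real.log m * (P n).smoothNumbers.indicator 1 m) s := by
  have hQ : Q n =ᶠ[𝓝 s] dirichletSeries ((P n).smoothNumbers.indicator 1) := by
    filter_upwards [Ioi_mem_nhds hs] with y hy using Q_eq_dirichletSeries n hy
  exact ((hasDerivAt_dirichletSeries (norm_indicator_one_le _) hs).congr_of_eventuallyEq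
    hQ).deriv

lemma dirichletSeries_log_pos {s : ℝ} (hs : 1 < s) :
    0 < dirichletSeries (fun m => Real.log m) s :=
  (summable_log_mul_rpow_neg hs).tsum_pos
    (fun m => mul_nonneg (Real.log_natCast_nonneg m) (rpow_nonneg m.cast_nonneg _)) 2
    (by simp only [Nat.cast_ofNat]; positivity)

lemma one_sub_deriv_Q_div_deriv_zetaR (n : ℕ) {s : ℝ} (hs : 1 < s) :
    1 - deriv (Q n) s / deriv zetaR s =
      dirichletSeries (fun m => Real.log m * ((P n).smoothNumbers)ᶜ.indicator 1 m) s /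
        dirichletSeries (fun m => Real.log m) s := by
  set S := (P n).smoothNumbers
  have hsplit : (fun m : ℕ => Real.log m * Sᶜ.indicator 1 m) =
      (fun m : ℕ => Real.log m) - fun m : ℕ => Real.log m * S.indicator 1 m := by
    funext m; by_cases hm : m ∈ S <;> simp [hm]
  rw [deriv_Q n hs, deriv_zetaR hs, neg_div_neg_eq,
    one_sub_div (dirichletSeries_log_pos hs).ne', hsplit, dirichletSeries_sub]
  · simpa using summable_log_mul_rpow_neg hs
  · exact summable_log_mul_mul_rpow_neg (norm_indicator_one_le S) hs

lemma tendsto_rpow_mul_dirichletSeries_log_nonsmooth (n : ℕ) :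
    Tendsto (fun s => (P n : ℝ) ^ s *
      dirichletSeries (fun m => Real.log m * ((P n).smoothNumbers)ᶜ.indicator 1 m) s) atTop
      (𝓝 (Real.log (P n))) := by
  set S := (P n).smoothNumbers
  have hp : (P n).Prime := Nat.prime_nth_prime n
  have hpS : P n ∉ S := fun h => (Nat.mem_smoothNumbers'.mp h (P n) hp dvd_rfl).false
  have hvanish (m : ℕ) (hm : m < P n) : Real.log m * Sᶜ.indicator 1 m = 0 := by
    rcases Nat.eq_zero_or_pos m with rfl | hm0
    · simp
    · have hmS : m ∈ S := Nat.mem_smoothNumbers_of_lt hm0 hm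
      rw [Set.indicator_of_notMem (Set.notMem_compl_iff.mpr hmS), mul_zero]
  simpa [hpS] using tendsto_rpow_mul_dirichletSeries hp.pos hvanish
    (summable_log_mul_mul_rpow_neg (norm_indicator_one_le Sᶜ) one_lt_two).norm

lemma tendsto_two_rpow_mul_dirichletSeries_log :
    Tendsto (fun s => (2 : ℝ) ^ s * dirichletSeries (fun m => Real.log m) s) atTop
      (𝓝 (Real.log 2)) := by
  have hvanish (m : ℕ) (hm : m < 2) : Real.log m = 0 := by interval_cases m <;> simp
  simpa using tendsto_rpow_mul_dirichletSeries two_pos hvanish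
    (summable_log_mul_rpow_neg one_lt_two).norm

theorem half_prime_limit (n : ℕ) :
    Tendsto (fun s : ℝ => (1 - deriv (Q n) s / deriv zetaR s) ^ (-1 / s)) atTop
      (nhds ((P n : ℝ) / 2)) := by
  have hp : (P n).Prime := Nat.prime_nth_prime n
  have hnum := tendsto_rpow_neg_one_div_of_tendsto_rpow_mul (by exact_mod_cast hp.pos)
    (log_pos (by exact_mod_cast hp.one_lt)) (tendsto_rpow_mul_dirichletSeries_log_nonsmooth n)
  have hden := tendsto_rpow_neg_one_div_of_tendsto_rpow_mul two_pos (log_pos one_lt_two)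
    tendsto_two_rpow_mul_dirichletSeries_log
  refine (hnum.div hden two_ne_zero).congr' ?_
  filter_upwards [eventually_gt_atTop 1] with s hs
  have hnum_nonneg : 0 ≤ dirichletSeries
      (fun m => Real.log m * ((P n).smoothNumbers)ᶜ.indicator 1 m) s :=
    dirichletSeries_nonneg (fun m => mul_nonneg (Real.log_natCast_nonneg m)
      (Set.indicator_nonneg (fun _ _ => zero_le_one) m)) s
  rw [one_sub_deriv_Q_div_deriv_zetaR n hs,
    div_rpow hnum_nonneg (dirichletSeries_log_pos hs).le]
  rfl
end
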